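/- arXiv:1510.00094 — 2 statements merged into one kernel-verified Lean document; each statement's English description precedes it below -/
import Mathlib

section
/- The SCAD penalty with λ > 0, a > 2 can be written as a difference of two convex functions: p_λ(|β|) = λ|β| − q(β), where q(β) = λ|β| − p_λ(|β|) is convex on ℝ. -/
/-!
On `β ≥ 0`, `λβ - p_λ(β)` vanishes up to `λ`, equals `(β - λ)² / (2(a - 1))` up to `aλ` and is
affine of slope `λ` beyond, so it is `(a - 1)⁻¹ H(β - λ)` for the one-sided Huber function `H`,
the primitive of `clamp(·, 0, (a - 1)λ)` vanishing on `(-∞, 0]`. Having a monotone nonnegative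
derivative, `H` is convex and nondecreasing, hence `q = (a - 1)⁻¹ H(|·| - λ)` is convex.
-/

open Set Filter Asymptotics

lemma abs_sq_max_zero_sub_linear_le (x h : ℝ) :
    |max (x + h) 0 ^ 2 - max x 0 ^ 2 - h * (2 * max x 0)| ≤ h ^ 2 := by
  rcases le_total 0 x with hx | hx <;> rcases le_total 0 (x + h) with hxh | hxh <;>
    simp only [max_eq_left, max_eq_right, hx, hxh] <;>
    rw [abs_le] <;> constructor <;> nlinarith

lemma hasDerivAt_sq_max_zero (x : ℝ) :
    HasDerivAt (fun s : ℝ => max s 0 ^ 2) (2 * max x 0) x := by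
  rw [hasDerivAt_iff_isLittleO_nhds_zero]
  refine IsBigO.trans_isLittleO (g := fun h : ℝ => h ^ 2) ?_ (isLittleO_pow_id one_lt_two)
  refine IsBigO.of_bound 1 (Eventually.of_forall fun h => ?_)
  simpa [abs_of_nonneg (sq_nonneg h)] using abs_sq_max_zero_sub_linear_le x h

lemma convexOn_univ_of_hasDerivAt {f f' : ℝ → ℝ} (hf : ∀ x, HasDerivAt f (f' x) x)
    (hf' : Monotone f') : ConvexOn ℝ univ f := by
  refine Monotone.convexOn_univ_of_deriv (fun x => (hf x).differentiableAt) ?_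
  rwa [show deriv f = f' from funext fun x => (hf x).deriv]

theorem ConvexOn.comp_of_monotone {𝕜 E α β : Type*} [Semiring 𝕜] [PartialOrder 𝕜]
    [AddCommMonoid E] [AddCommMonoid α] [PartialOrder α] [AddCommMonoid β] [PartialOrder β]
    [SMul 𝕜 E] [SMul 𝕜 α] [SMul 𝕜 β] {s : Set E} {f : E → β} {g : β → α}
    (hg : ConvexOn 𝕜 univ g) (hg' : Monotone g) (hf : ConvexOn 𝕜 s f) : ConvexOn 𝕜 s (g ∘ f) :=
  ⟨hf.1, fun _ hx _ hy _ _ ha hb hab =>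
    (hg' (hf.2 hx hy ha hb hab)).trans (hg.2 trivial trivial ha hb hab)⟩

lemma max_zero_sub_max_sub_zero {c : ℝ} (hc : 0 ≤ c) (s : ℝ) :
    max s 0 - max (s - c) 0 = min (max s 0) c := by
  rw [min_def, max_def, max_def]
  split_ifs <;> linarith

/-- The one-sided Huber function: the primitive of `s ↦ min (max s 0) c` vanishing on `s ≤ 0`. -/
noncomputable def clampPrimitive (c s : ℝ) : ℝ := (max s 0 ^ 2 - max (s - c) 0 ^ 2) / 2

lemma hasDerivAt_clampPrimitive {c : ℝ} (hc : 0 ≤ c) (x : ℝ) :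
    HasDerivAt (clampPrimitive c) (min (max x 0) c) x := by
  have h := ((hasDerivAt_sq_max_zero x).sub
    ((hasDerivAt_sq_max_zero (x - c)).comp x ((hasDerivAt_id x).sub_const c))).div_const 2
  refine h.congr_deriv ?_
  rw [← max_zero_sub_max_sub_zero hc]
  ring

lemma convexOn_clampPrimitive {c : ℝ} (hc : 0 ≤ c) : ConvexOn ℝ univ (clampPrimitive c) :=
  convexOn_univ_of_hasDerivAt (hasDerivAt_clampPrimitive hc) fun _ _ hxy =>
    min_le_min_right c (max_le_max_right 0 hxy)

lemma monotone_clampPrimitive {c : ℝ} (hc : 0 ≤ c) : Monotone (clampPrimitive c) :=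
  monotone_of_hasDerivAt_nonneg (hasDerivAt_clampPrimitive hc) fun _ =>
    le_min (le_max_right _ _) hc

noncomputable def scad (lam a β : ℝ) : ℝ :=
  if β < lam then lam * β
  else if β ≤ a * lam then (a * lam * β - (β ^ 2 + lam ^ 2) / 2) / (a - 1)
  else (a + 1) * lam ^ 2 / 2

lemma mul_sub_scad {lam a : ℝ} (hlam : 0 ≤ lam) (ha : 1 < a) (β : ℝ) :
    lam * β - scad lam a β = clampPrimitive ((a - 1) * lam) (β - lam) / (a - 1) := by
  have ha1 : a - 1 ≠ 0 := by linarith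
  unfold scad clampPrimitive
  split_ifs with h₁ h₂
  · rw [max_eq_right (by linarith), max_eq_right (by nlinarith)]
    simp
  · rw [max_eq_left (by linarith), max_eq_right (by linarith)]
    field_simp
    ring
  · rw [max_eq_left (by linarith), max_eq_left (by linarith)]
    field_simp
    ring

theorem scad_dc_decomposition (lam a : ℝ) (hlam : 0 < lam) (ha : 2 < a)
    (p : ℝ → ℝ)
    (hp : ∀ β : ℝ, 0 ≤ β →
      p β = if β < lam then lam * β
            else if β ≤ a * lam then (a * lam * β - (β^2 + lam^2) / 2) / (a - 1)
            else (a + 1) * lam^2 / 2)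
    (q : ℝ → ℝ) (hq : ∀ β : ℝ, q β = lam * |β| - p |β|) :
    (∀ β : ℝ, p |β| = lam * |β| - q β) ∧ ConvexOn ℝ Set.univ q := by
  refine ⟨fun β => by linarith [hq β], ?_⟩
  have hp_scad : ∀ β, 0 ≤ β → p β = scad lam a β := hp
  have ha1 : 0 ≤ (a - 1)⁻¹ := inv_nonneg.2 (by linarith)
  have hc : 0 ≤ (a - 1) * lam := mul_nonneg (by linarith) hlam.le
  have hq_eq :
      q = (fun t => (a - 1)⁻¹ • clampPrimitive ((a - 1) * lam) t) ∘ fun β => |β| - lam := by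
    ext β
    rw [hq, hp_scad _ (abs_nonneg β), mul_sub_scad hlam.le (by linarith), div_eq_inv_mul]
    rfl
  have h_abs : ConvexOn ℝ univ fun β : ℝ => |β| - lam :=
    (convexOn_norm convex_univ).add_const (-lam)
  rw [hq_eq]
  exact ((convexOn_clampPrimitive hc).smul ha1).comp_of_monotone
    ((monotone_clampPrimitive hc).const_mul ha1) h_abs
end

section
/- For the IPW variance decomposition: with Σ₂ = E[(1/π(T))·δψ(δψ)ᵀ], Σ₄ = E[((1−π(T))/π(T))·m(T)m(T)ᵀ] where m(T) = E[δψ|T], the matrix Σ₂ − Σ₄ equals E[δψ(δψ)ᵀ] + E[((1−π(T))/π(T))·(δψ − m(T))(δψ − m(T))ᵀ], and in particular Σ₂ − Σ₄ is positive semidefinite. -/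
/-!
With `g = (1 - π) / π` one has `1 / π = 1 + g`, so `Σ₂ = E[δψ δψᵀ] + E[g δψ δψᵀ]`. Since `g` and
`m` are functions of `T`, the tower property turns the cross terms `E[g δψ mᵀ]` into `E[g m mᵀ]`,
whence `E[g (δψ - m)(δψ - m)ᵀ] = E[g δψ δψᵀ] - E[g m mᵀ]`. Both summands on the right are Gram
matrices with a nonnegative weight `w`, and `xᵀ E[w f fᵀ] x = E[w (xᵀ f)²] ≥ 0`.
-/

open MeasureTheory ProbabilityTheory Matrix

section Gram

variable {Ω ι : Type*} [MeasurableSpace Ω] {μ : Measure Ω} [Fintype ι]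

theorem posSemidef_of_integral_weighted_gram {w : Ω → ℝ} (hw : 0 ≤ᵐ[μ] w) {f : Ω → ι → ℝ}
    (hf : ∀ i j, Integrable (fun ω => w ω * (f ω i * f ω j)) μ) :
    (Matrix.of fun i j => ∫ ω, w ω * (f ω i * f ω j) ∂μ).PosSemidef := by
  refine .of_dotProduct_mulVec_nonneg ?_ fun x => ?_
  · ext i j
    simp only [conjTranspose_apply, of_apply, star_trivial, mul_comm (f _ i)]
  · have hquad : star x ⬝ᵥ ((Matrix.of fun i j => ∫ ω, w ω * (f ω i * f ω j) ∂μ) *ᵥ x) =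
        ∫ ω, w ω * (∑ i, x i * f ω i) ^ 2 ∂μ := by
      calc _ = ∑ i, ∑ j, ∫ ω, x i * x j * (w ω * (f ω i * f ω j)) ∂μ := by
            simp only [dotProduct, mulVec, of_apply, star_trivial, Finset.mul_sum,
              integral_const_mul]
            exact Finset.sum_congr rfl fun i _ => Finset.sum_congr rfl fun j _ => by ring
        _ = ∫ ω, ∑ i, ∑ j, x i * x j * (w ω * (f ω i * f ω j)) ∂μ := by
            rw [integral_finsetSum _ fun i _ => integrable_finsetSum _ fun j _ =>
              (hf i j).const_mul _]
            simp only [integral_finsetSum _ fun j _ => (hf _ j).const_mul _]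
        _ = _ := by
            congr 1 with ω
            rw [sq, Finset.sum_mul_sum, Finset.mul_sum]
            refine Finset.sum_congr rfl fun i _ => ?_
            rw [Finset.mul_sum]
            exact Finset.sum_congr rfl fun j _ => by ring
    rw [hquad]
    exact integral_nonneg_of_ae (hw.mono fun ω hω => mul_nonneg hω (sq_nonneg _))

theorem posSemidef_of_integral_gram {f : Ω → ι → ℝ}
    (hf : ∀ i j, Integrable (fun ω => f ω i * f ω j) μ) :
    (Matrix.of fun i j => ∫ ω, f ω i * f ω j ∂μ).PosSemidef := by
  simpa only [one_mul] using
    posSemidef_of_integral_weighted_gram (w := fun _ => 1) (ae_of_all _ fun _ => zero_le_one)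
      (by simpa only [one_mul] using hf)

end Gram

section CondExp

variable {Ω : Type*} {m m₀ : MeasurableSpace Ω} {μ : Measure[m₀] Ω}

theorem integrable_bdd_mul_mul_of_memLp_two {w X Y : Ω → ℝ} {C : ℝ}
    (hw : AEStronglyMeasurable w μ) (hwC : ∀ᵐ ω ∂μ, ‖w ω‖ ≤ C)
    (hX : MemLp X 2 μ) (hY : MemLp Y 2 μ) :
    Integrable (fun ω => w ω * (X ω * Y ω)) μ :=
  (hX.integrable_mul hY).bdd_mul hw hwC

theorem integral_mul_condExp_of_stronglyMeasurable (hm : m ≤ m₀) [SigmaFinite (μ.trim hm)]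
    {h f : Ω → ℝ} (hh : StronglyMeasurable[m] h) (hhf : Integrable (h * f) μ)
    (hf : Integrable f μ) :
    ∫ ω, h ω * μ[f|m] ω ∂μ = ∫ ω, h ω * f ω ∂μ := by
  calc ∫ ω, h ω * μ[f|m] ω ∂μ = ∫ ω, μ[h * f|m] ω ∂μ :=
        integral_congr_ae (condExp_mul_of_stronglyMeasurable_left hh hhf hf).symm
    _ = ∫ ω, (h * f) ω ∂μ := integral_condExp hm

theorem integral_weighted_condCov [IsFiniteMeasure μ] (hm : m ≤ m₀) {w X Y : Ω → ℝ} {C : ℝ}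
    (hw : StronglyMeasurable[m] w) (hwC : ∀ᵐ ω ∂μ, ‖w ω‖ ≤ C) (hX : MemLp X 2 μ) (hY : MemLp Y 2 μ) :
    ∫ ω, w ω * ((X ω - μ[X|m] ω) * (Y ω - μ[Y|m] ω)) ∂μ =
      ∫ ω, w ω * (X ω * Y ω) ∂μ - ∫ ω, w ω * (μ[X|m] ω * μ[Y|m] ω) ∂μ := by
  have hint {A B : Ω → ℝ} (hA : MemLp A 2 μ) (hB : MemLp B 2 μ) :
      Integrable (fun ω => w ω * (A ω * B ω)) μ :=
    integrable_bdd_mul_mul_of_memLp_two (hw.mono hm).aestronglyMeasurable hwC hA hB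
  have hcross {A B : Ω → ℝ} (hA : MemLp A 2 μ) (hB : MemLp B 2 μ) :
      ∫ ω, w ω * (μ[B|m] ω * A ω) ∂μ = ∫ ω, w ω * (μ[B|m] ω * μ[A|m] ω) ∂μ := by
    simp only [← mul_assoc]
    refine (integral_mul_condExp_of_stronglyMeasurable hm
      (hw.mul stronglyMeasurable_condExp) ?_ (hA.integrable one_le_two)).symm
    exact (hint (hB.condExp one_le_two) hA).congr (ae_of_all _ fun _ => (mul_assoc _ _ _).symm)
  have hcX := hX.condExp (m := m) one_le_two
  have hcY := hY.condExp (m := m) one_le_two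
  calc _ = ∫ ω, w ω * (X ω * Y ω) - w ω * (μ[Y|m] ω * X ω) - w ω * (μ[X|m] ω * Y ω)
          + w ω * (μ[X|m] ω * μ[Y|m] ω) ∂μ := by
        congr 1 with ω
        ring
    _ = _ := by
        rw [integral_add ?_ (hint hcX hcY), integral_sub ?_ (hint hcX hY),
          integral_sub (hint hX hY) (hint hcY hX), hcross hX hY, hcross hY hX]
        · simp only [mul_comm (μ[Y|m] _)]
          ring
        · exact (hint hX hY).sub (hint hcY hX)
        · exact ((hint hX hY).sub (hint hcY hX)).sub (hint hcX hY)

theorem integral_weighted_gram_decomposition [IsFiniteMeasure μ] (hm : m ≤ m₀) {ι : Type*}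
    {w : Ω → ℝ} {C : ℝ} (hw : StronglyMeasurable[m] w) (hwC : ∀ᵐ ω ∂μ, ‖w ω‖ ≤ C)
    {d : Ω → ι → ℝ} (hd : ∀ i, MemLp (fun ω => d ω i) 2 μ) :
    (Matrix.of fun i j => ∫ ω, (1 + w ω) * (d ω i * d ω j) ∂μ) -
        (Matrix.of fun i j => ∫ ω, w ω * (μ[fun ω => d ω i|m] ω * μ[fun ω => d ω j|m] ω) ∂μ) =
      (Matrix.of fun i j => ∫ ω, d ω i * d ω j ∂μ) +
        Matrix.of fun i j => ∫ ω, w ω *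
          ((d ω i - μ[fun ω => d ω i|m] ω) * (d ω j - μ[fun ω => d ω j|m] ω)) ∂μ := by
  ext i j
  have hdd : Integrable (fun ω => d ω i * d ω j) μ := (hd i).integrable_mul (hd j)
  simp only [Matrix.sub_apply, Matrix.add_apply, of_apply, add_mul, one_mul]
  rw [integral_add hdd (integrable_bdd_mul_mul_of_memLp_two (hw.mono hm).aestronglyMeasurable
      hwC (hd i) (hd j)), integral_weighted_condCov hm hw hwC (hd i) (hd j)]
  ring

end CondExp

theorem ipw_variance_decomposition_general {Ω α : Type*}
    [mΩ : MeasurableSpace Ω] [MeasurableSpace α]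
    (μ : Measure Ω) [IsProbabilityMeasure μ] (q : ℕ)
    (T : Ω → α) (hT : Measurable T)
    (π : α → ℝ) (hπ : Measurable π)
    (αl αu : ℝ) (hαl : 0 < αl) (hαu : αu < 1)
    (hπbd : ∀ x, αl ≤ π x ∧ π x ≤ αu)
    (d : Ω → Fin q → ℝ)
    (hd : ∀ i, MemLp (fun ω => d ω i) 2 μ)
    (m : α → Fin q → ℝ)
    (hmdef : ∀ i, μ[fun ω => d ω i | MeasurableSpace.comap T inferInstance]
        =ᵐ[μ] fun ω => m (T ω) i) :
    ((Matrix.of fun i j => ∫ ω, (1 / π (T ω)) * (d ω i * d ω j) ∂μ :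
        Matrix (Fin q) (Fin q) ℝ) -
      (Matrix.of fun i j =>
        ∫ ω, ((1 - π (T ω)) / π (T ω)) * (m (T ω) i * m (T ω) j) ∂μ) =
      (Matrix.of fun i j => ∫ ω, d ω i * d ω j ∂μ) +
        (Matrix.of fun i j =>
          ∫ ω, ((1 - π (T ω)) / π (T ω)) *
            ((d ω i - m (T ω) i) * (d ω j - m (T ω) j)) ∂μ)) ∧
      ((Matrix.of fun i j => ∫ ω, (1 / π (T ω)) * (d ω i * d ω j) ∂μ :
          Matrix (Fin q) (Fin q) ℝ) -
        (Matrix.of fun i j =>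
          ∫ ω, ((1 - π (T ω)) / π (T ω)) * (m (T ω) i * m (T ω) j) ∂μ)).PosSemidef := by
  set c : Fin q → Ω → ℝ := fun i => μ[fun ω => d ω i | MeasurableSpace.comap T inferInstance]
  set g : Ω → ℝ := fun ω => (1 - π (T ω)) / π (T ω)
  have hπpos (x : α) : 0 < π x := hαl.trans_le (hπbd x).1
  have hg_nonneg (ω : Ω) : 0 ≤ g ω :=
    div_nonneg (by linarith [(hπbd (T ω)).2]) (hπpos _).le
  have hg_bound : ∀ᵐ ω ∂μ, ‖g ω‖ ≤ 1 / αl := ae_of_all _ fun ω => by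
    rw [Real.norm_of_nonneg (hg_nonneg ω)]
    exact div_le_div₀ zero_le_one (by linarith [hπpos (T ω)]) hαl (hπbd _).1
  have hg_meas : StronglyMeasurable[MeasurableSpace.comap T inferInstance] g :=
    (((measurable_const.sub hπ).div hπ).comp (comap_measurable T)).stronglyMeasurable
  have hm_ae : ∀ᵐ ω ∂μ, ∀ i, m (T ω) i = c i ω := ae_all_iff.2 fun i => (hmdef i).symm
  have hinv : (Matrix.of fun i j => ∫ ω, (1 / π (T ω)) * (d ω i * d ω j) ∂μ) =
      Matrix.of fun i j => ∫ ω, (1 + g ω) * (d ω i * d ω j) ∂μ := by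
    ext i j
    refine integral_congr_ae (ae_of_all _ fun ω => ?_)
    simp only [g]
    field_simp [(hπpos (T ω)).ne']
    ring
  have hV : (Matrix.of fun i j => ∫ ω, g ω * ((d ω i - m (T ω) i) * (d ω j - m (T ω) j)) ∂μ) =
      Matrix.of fun i j => ∫ ω, g ω * ((d ω i - c i ω) * (d ω j - c j ω)) ∂μ := by
    ext i j
    exact integral_congr_ae (hm_ae.mono fun ω h => by simp only [h])
  have hmc : (Matrix.of fun i j => ∫ ω, g ω * (m (T ω) i * m (T ω) j) ∂μ) =
      Matrix.of fun i j => ∫ ω, g ω * (c i ω * c j ω) ∂μ := by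
    ext i j
    exact integral_congr_ae (hm_ae.mono fun ω h => by simp only [h])
  rw [hinv, hmc, hV, integral_weighted_gram_decomposition hT.comap_le hg_meas hg_bound hd]
  exact ⟨rfl, (posSemidef_of_integral_gram fun i j => (hd i).integrable_mul (hd j)).add <|
    posSemidef_of_integral_weighted_gram (ae_of_all _ hg_nonneg) fun i j =>
      integrable_bdd_mul_mul_of_memLp_two (hg_meas.mono hT.comap_le).aestronglyMeasurable
        hg_bound ((hd i).sub ((hd i).condExp one_le_two)) ((hd j).sub ((hd j).condExp one_le_two))⟩

theorem ipw_variance_decomposition {Ω α : Type*}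
    [mΩ : MeasurableSpace Ω] [MeasurableSpace α]
    (μ : Measure Ω) [IsProbabilityMeasure μ] (q : ℕ)
    (T : Ω → α) (hT : Measurable T)
    (π : α → ℝ) (hπ : Measurable π)
    (αl αu : ℝ) (hαl : 0 < αl) (hαu : αu < 1)
    (hπbd : ∀ x, αl ≤ π x ∧ π x ≤ αu)
    (d : Ω → Fin q → ℝ) (hdmeas : Measurable d)
    (hd : ∀ i, MemLp (fun ω => d ω i) 2 μ)
    (m : α → Fin q → ℝ) (hmmeas : Measurable m)
    (hmL2 : ∀ i, MemLp (fun ω => m (T ω) i) 2 μ)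
    (hmdef : ∀ i, μ[fun ω => d ω i | MeasurableSpace.comap T inferInstance]
        =ᵐ[μ] fun ω => m (T ω) i) :
    ((Matrix.of fun i j => ∫ ω, (1 / π (T ω)) * (d ω i * d ω j) ∂μ :
        Matrix (Fin q) (Fin q) ℝ) -
      (Matrix.of fun i j =>
        ∫ ω, ((1 - π (T ω)) / π (T ω)) * (m (T ω) i * m (T ω) j) ∂μ) =
      (Matrix.of fun i j => ∫ ω, d ω i * d ω j ∂μ) +
        (Matrix.of fun i j =>
          ∫ ω, ((1 - π (T ω)) / π (T ω)) *
            ((d ω i - m (T ω) i) * (d ω j - m (T ω) j)) ∂μ)) ∧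
      ((Matrix.of fun i j => ∫ ω, (1 / π (T ω)) * (d ω i * d ω j) ∂μ :
          Matrix (Fin q) (Fin q) ℝ) -
        (Matrix.of fun i j =>
          ∫ ω, ((1 - π (T ω)) / π (T ω)) * (m (T ω) i * m (T ω) j) ∂μ)).PosSemidef :=
  ipw_variance_decomposition_general (mΩ := mΩ) μ q T hT π hπ αl αu hαl hαu hπbd d hd m hmdef
end
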